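/- Let b ≤ 0 and s > 0. The function t ↦ ∫_0^s ψ_{s+t}(y) dy is strictly decreasing on (0, ∞). -/

import Mathlib

open MeasureTheory

/-- The standard normal cumulative distribution function `Φ`. -/
noncomputable def Phi (y : ℝ) : ℝ :=
  ∫ z in Set.Iic y, Real.exp (-z ^ 2 / 2) / Real.sqrt (2 * Real.pi)

/-- The conditional density `ψ_T(u)` of the last-passage time prior to `T` of Brownian
motion through the line `a + b t`, given that the first passage occurs before `T`. -/
noncomputable def psi (b T u : ℝ) : ℝ :=
  Real.exp (-b ^ 2 * u / 2) / (Real.pi * Real.sqrt (u * (T - u))) *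
    (Real.exp (-b ^ 2 * (T - u) / 2) +
      b / 2 * Real.sqrt (2 * Real.pi * (T - u)) * (2 * Phi (b * Real.sqrt (T - u)) - 1))

/-!
For `0 < u < T` the density factors as `ψ_T(u) = e^{-b²u/2} / (π √u) · G(T - u) / √(T - u)`,
where `G(v) = e^{-b²v/2} + (b/2) √(2πv) (2Φ(b√v) - 1)`. Differentiating, the Gaussian terms
cancel and `(G(v) / √v)' = -e^{-b²v/2} / (2 v^{3/2}) < 0` for every `b`. Hence `ψ_T(u)` is
strictly decreasing in `T` for each fixed `u`, and so is its integral over `(0, s]`, which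
converges because `ψ_T(u) = O(u^{-1/2})` near `0`.
-/

open Set Real

noncomputable def phi (z : ℝ) : ℝ := exp (-z ^ 2 / 2) / √(2 * π)

lemma continuous_phi : Continuous phi := by
  unfold phi; fun_prop

lemma integrable_phi : Integrable phi := by
  refine ((integrable_exp_neg_mul_sq (b := 1 / 2) (by norm_num)).div_const √(2 * π)).congr
    (ae_of_all _ fun z => ?_)
  unfold phi; ring_nf

lemma hasDerivAt_Phi (y : ℝ) : HasDerivAt Phi (phi y) y := by
  have hPhi : Phi = fun x => Phi 0 + ∫ z in (0 : ℝ)..x, phi z := by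
    funext x
    have := intervalIntegral.integral_Iic_sub_Iic (μ := volume) (a := 0) (b := x)
      integrable_phi.integrableOn integrable_phi.integrableOn
    unfold Phi phi at *
    linarith
  rw [hPhi]
  exact ((continuous_phi.integral_hasStrictDerivAt 0 y).hasDerivAt).const_add _

lemma continuous_Phi : Continuous Phi :=
  continuous_iff_continuousAt.2 fun y => (hasDerivAt_Phi y).continuousAt

noncomputable def psiCore (b v : ℝ) : ℝ :=
  exp (-b ^ 2 * v / 2) + b / 2 * √(2 * π * v) * (2 * Phi (b * √v) - 1)

lemma continuous_psiCore (b : ℝ) : Continuous (psiCore b) := by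
  have := continuous_Phi
  unfold psiCore; fun_prop

lemma psi_eq_mul_psiCore (b T u : ℝ) :
    psi b T u = exp (-b ^ 2 * u / 2) / (π * √(u * (T - u))) * psiCore b (T - u) := rfl

lemma hasDerivAt_psiCore (b : ℝ) {v : ℝ} (hv : 0 < v) :
    HasDerivAt (psiCore b) (b * √(2 * π) * (2 * Phi (b * √v) - 1) / (4 * √v)) v := by
  have hS : HasDerivAt Real.sqrt (1 / (2 * √v)) v := hasDerivAt_sqrt hv.ne'
  have hE : HasDerivAt (fun v => exp (-b ^ 2 * v / 2)) (exp (-b ^ 2 * v / 2) * (-b ^ 2 / 2)) v :=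
    ((hasDerivAt_id v).const_mul (-b ^ 2) |>.div_const 2 |>.exp).congr_deriv (by simp)
  have hP : HasDerivAt (fun v => Phi (b * √v)) (phi (b * √v) * (b * (1 / (2 * √v)))) v :=
    (hasDerivAt_Phi _).comp v (hS.const_mul b)
  have hSq : HasDerivAt (fun v => √(2 * π * v)) (√(2 * π) * (1 / (2 * √v))) v := by
    simp_rw [sqrt_mul (by positivity : (0 : ℝ) ≤ 2 * π)]
    exact hS.const_mul _
  refine (hE.add ((hSq.const_mul (b / 2)).mul ((hP.const_mul 2).sub_const 1))).congr_deriv ?_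
  -- `√(2π) φ(b√v) = e^{-b²v/2}`, so the two Gaussian terms cancel.
  have hphi : √(2 * π) * phi (b * √v) = exp (-b ^ 2 * v / 2) := by
    unfold phi
    rw [mul_pow, sq_sqrt hv.le, mul_div_cancel₀ _ (by positivity)]
    ring_nf
  rw [sqrt_mul (by positivity : (0 : ℝ) ≤ 2 * π), ← hphi]
  field_simp
  ring

lemma hasDerivAt_psiCore_div_sqrt (b : ℝ) {v : ℝ} (hv : 0 < v) :
    HasDerivAt (fun v => psiCore b v / √v) (-exp (-b ^ 2 * v / 2) / (2 * v * √v)) v := by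
  have hsqrt : 0 < √v := sqrt_pos.2 hv
  refine ((hasDerivAt_psiCore b hv).div (hasDerivAt_sqrt hv.ne') hsqrt.ne').congr_deriv ?_
  have hv2 : √v ^ 2 = v := sq_sqrt hv.le
  unfold psiCore
  rw [sqrt_mul (by positivity : (0 : ℝ) ≤ 2 * π)]
  field_simp
  rw [hv2]
  ring

lemma strictAntiOn_psiCore_div_sqrt (b : ℝ) :
    StrictAntiOn (fun v => psiCore b v / √v) (Ioi 0) := by
  refine strictAntiOn_of_deriv_neg (convex_Ioi 0)
    (fun v hv => (hasDerivAt_psiCore_div_sqrt b hv).continuousAt.continuousWithinAt) ?_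
  intro v hv
  rw [interior_Ioi] at hv
  have hv : 0 < v := hv
  rw [(hasDerivAt_psiCore_div_sqrt b hv).deriv]
  have := exp_pos (-b ^ 2 * v / 2)
  have := sqrt_pos.2 hv
  exact div_neg_of_neg_of_pos (by linarith) (by positivity)

lemma psi_eq_inv_sqrt_mul {b T u : ℝ} (hu : 0 < u) (huT : u < T) :
    psi b T u = (√u)⁻¹ * (exp (-b ^ 2 * u / 2) / π * (psiCore b (T - u) / √(T - u))) := by
  rw [psi_eq_mul_psiCore, sqrt_mul hu.le]
  have := sqrt_pos.2 hu
  have := sqrt_pos.2 (sub_pos.2 huT)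
  field_simp

lemma psi_lt_psi_of_lt {b T₁ T₂ u : ℝ} (hu : 0 < u) (huT : u < T₁) (hT : T₁ < T₂) :
    psi b T₂ u < psi b T₁ u := by
  rw [psi_eq_inv_sqrt_mul hu huT, psi_eq_inv_sqrt_mul hu (huT.trans hT)]
  refine mul_lt_mul_of_pos_left (mul_lt_mul_of_pos_left ?_ (by positivity))
    (inv_pos.2 (sqrt_pos.2 hu))
  exact strictAntiOn_psiCore_div_sqrt b (sub_pos.2 huT) (sub_pos.2 (huT.trans hT))
    (by linarith)

lemma integrableOn_inv_sqrt (s : ℝ) : IntegrableOn (fun u : ℝ => (√u)⁻¹) (Ioc 0 s) := by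
  rcases le_total s 0 with hs | hs
  · simp [Ioc_eq_empty_of_le hs]
  refine ((intervalIntegrable_iff_integrableOn_Ioc_of_le hs).1
    (intervalIntegral.intervalIntegrable_rpow' (r := -(1 / 2)) (by norm_num))).congr_fun
    (fun u hu => ?_) measurableSet_Ioc
  show u ^ (-(1 / 2) : ℝ) = (√u)⁻¹
  rw [sqrt_eq_rpow, rpow_neg hu.1.le]

lemma intervalIntegrable_psi (b : ℝ) {s T : ℝ} (hs : 0 ≤ s) (hsT : s < T) :
    IntervalIntegrable (psi b T) volume 0 s := by
  rw [intervalIntegrable_iff_integrableOn_Ioc_of_le hs]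
  have hcont : ContinuousOn (fun u => exp (-b ^ 2 * u / 2) / π * (psiCore b (T - u) / √(T - u)))
      (Icc 0 s) := by
    have := continuous_psiCore b
    refine ContinuousOn.mul (by fun_prop) (ContinuousOn.div (by fun_prop) (by fun_prop) ?_)
    exact fun u hu => (sqrt_pos.2 (by linarith [hu.2])).ne'
  refine ((integrableOn_inv_sqrt s).mul_continuousOn_of_subset hcont measurableSet_Ioc
    isCompact_Icc Ioc_subset_Icc_self).congr_fun (fun u hu => ?_) measurableSet_Ioc
  exact (psi_eq_inv_sqrt_mul hu.1 (hu.2.trans_lt hsT)).symm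

lemma intervalIntegral_lt_of_forall_Ioc_lt {f g : ℝ → ℝ} {a b : ℝ} (hab : a < b)
    (hf : IntervalIntegrable f volume a b) (hg : IntervalIntegrable g volume a b)
    (hlt : ∀ x ∈ Ioc a b, f x < g x) : ∫ x in a..b, f x < ∫ x in a..b, g x := by
  refine intervalIntegral.integral_lt_integral_of_ae_le_of_measure_setOfPred_lt_ne_zero hab.le
    hf hg ((ae_restrict_iff' measurableSet_Ioc).2 (ae_of_all _ fun x hx => (hlt x hx).le)) ?_
  rw [Measure.restrict_apply' measurableSet_Ioc, inter_eq_right.2 (show Ioc a b ⊆ {x | f x < g x} from hlt)]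
  simp [hab]

theorem stmt_3_general (b s : ℝ) (hs : 0 < s) :
    StrictAntiOn (fun t : ℝ => ∫ y in (0:ℝ)..s, psi b (s + t) y) (Set.Ioi 0) := by
  intro t₁ ht₁ t₂ _ ht
  have hsT : s < s + t₁ := lt_add_of_pos_right s ht₁
  exact intervalIntegral_lt_of_forall_Ioc_lt hs
    (intervalIntegrable_psi b hs.le (hsT.trans (by linarith)))
    (intervalIntegrable_psi b hs.le hsT)
    fun u hu => psi_lt_psi_of_lt hu.1 (hu.2.trans_lt hsT) (by linarith)

/-- for `b ≤ 0` and `s > 0`, the function `t ↦ ∫_0^s ψ_{s+t}(y) dy` is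
strictly decreasing on `(0, ∞)`. -/
theorem stmt_3 (b s : ℝ) (hb : b ≤ 0) (hs : 0 < s) :
    StrictAntiOn (fun t : ℝ => ∫ y in (0:ℝ)..s, psi b (s + t) y) (Set.Ioi 0) :=
  stmt_3_general b s hs
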